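/- No degree-bounded finite dynamical system on a signed cycle is nilpotent. -/

import Mathlib

open scoped Classical

/-- A signed digraph on vertex set `V`: for each ordered pair of vertices there may be
a positive arc and/or a negative arc. -/
structure SDigraph (V : Type) where
  pos : V → V → Bool
  neg : V → V → Bool

namespace SDigraph

variable {V : Type}

/-- There is an arc (of some sign) from `a` to `b` (the underlying unsigned digraph). -/
def arc (G : SDigraph V) (a b : V) : Prop := G.pos a b = true ∨ G.neg a b = true

/-- Out-degree: positive and negative arcs are counted separately. -/
def outdeg [Fintype V] (G : SDigraph V) (i : V) : ℕ :=
  (Finset.univ.filter fun j => G.pos i j = true).card +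
  (Finset.univ.filter fun j => G.neg i j = true).card

/-- In-degree: positive and negative arcs are counted separately. -/
def indeg [Fintype V] (G : SDigraph V) (i : V) : ℕ :=
  (Finset.univ.filter fun j => G.pos j i = true).card +
  (Finset.univ.filter fun j => G.neg j i = true).card

/-- The symmetrized adjacency relation (for weak connectivity). -/
def wconnRel (G : SDigraph V) (a b : V) : Prop := G.arc a b ∨ G.arc b a

/-- `G` is (weakly) connected. -/
def Connected (G : SDigraph V) : Prop :=
  ∀ a b : V, Relation.ReflTransGen (wconnRel G) a b

/-- Directed reachability. -/
def Reach (G : SDigraph V) : V → V → Prop := Relation.ReflTransGen G.arc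

/-- Out-degree in the underlying unsigned digraph. -/
noncomputable def underOutdeg [Fintype V] (G : SDigraph V) (i : V) : ℕ :=
  (Finset.univ.filter fun j => G.arc i j).card

/-- In-degree in the underlying unsigned digraph. -/
noncomputable def underIndeg [Fintype V] (G : SDigraph V) (i : V) : ℕ :=
  (Finset.univ.filter fun j => G.arc j i).card

/-- `G` is a signed cycle: the underlying digraph is a directed cycle
(every vertex has exactly one out- and one in-neighbour and the graph is connected
and nonempty) and there are no parallel arcs. -/
def IsSignedCycleGraph [Fintype V] (G : SDigraph V) : Prop :=
  0 < Fintype.card V ∧ Connected G ∧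
  (∀ a b : V, ¬(G.pos a b = true ∧ G.neg a b = true)) ∧
  (∀ i : V, underOutdeg G i = 1) ∧
  (∀ i : V, underIndeg G i = 1)

/-- `steps G m a b`: there is a directed walk of length `m` from `a` to `b`. -/
def steps (G : SDigraph V) : ℕ → V → V → Prop
  | 0 => fun a b => a = b
  | m + 1 => fun a b => ∃ c, G.arc a c ∧ steps G m c b

/-- Directed distance from `a` to `b`, `⊤` if `b` is not reachable from `a`. -/
noncomputable def dist (G : SDigraph V) (a b : V) : ℕ∞ :=
  sInf {x : ℕ∞ | ∃ m : ℕ, steps G m a b ∧ x = (m : ℕ∞)}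

/-- The strong component containing `a`, as a finite set of vertices. -/
noncomputable def scc [Fintype V] (G : SDigraph V) (a : V) : Finset V :=
  Finset.univ.filter fun b => Reach G a b ∧ Reach G b a

/-- The strong component of `a` is initial: no arc enters it from outside. -/
def Initial [Fintype V] (G : SDigraph V) (a : V) : Prop :=
  ∀ b c : V, b ∈ scc G a → G.arc c b → c ∈ scc G a

/-- `λ(G) = max_i min_{initial strong component I} (d_G(I,i) + |I|)`. -/
noncomputable def lam [Fintype V] (G : SDigraph V) : ℕ∞ :=
  Finset.univ.sup fun i : V =>
    (Finset.univ.filter fun a : V => Initial G a).inf fun a =>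
      (scc G a).inf (fun b => dist G b i) + ((scc G a).card : ℕ∞)

/-- `G` is basic: all its initial strong components are trivial
(a single vertex with no loop). -/
def Basic [Fintype V] (G : SDigraph V) : Prop :=
  ∀ a : V, Initial G a → (scc G a).card = 1 ∧ ¬ G.arc a a

/-- The (weakly) connected component containing `a`. -/
noncomputable def component [Fintype V] (G : SDigraph V) (a : V) : Finset V :=
  Finset.univ.filter fun b => Relation.ReflTransGen (wconnRel G) a b

/-- The subgraph induced by a set `S` of vertices. -/
def induce (G : SDigraph V) (S : Finset V) : SDigraph {x : V // x ∈ S} :=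
  ⟨fun a b => G.pos a.1 b.1, fun a b => G.neg a.1 b.1⟩

/-- `v` (with arc signs `s`) is a directed cycle of `G` on `m+1` distinct vertices:
for each `t` there is an arc of sign `s t` from `v t` to `v (t+1)` (cyclically). -/
def IsSignedCycleOn (G : SDigraph V) (m : ℕ)
    (v : Fin (m + 1) → V) (s : Fin (m + 1) → Bool) : Prop :=
  Function.Injective v ∧
  ∀ t : Fin (m + 1),
    if s t then G.pos (v t) (v (t + 1)) = true else G.neg (v t) (v (t + 1)) = true

/-- `G` has a directed cycle (signs ignored). -/
def HasCycle (G : SDigraph V) : Prop :=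
  ∃ (m : ℕ) (v : Fin (m + 1) → V), Function.Injective v ∧
    ∀ t : Fin (m + 1), G.arc (v t) (v (t + 1))

/-- Number of negative arcs in a sign pattern. -/
def negCount {m : ℕ} (s : Fin (m + 1) → Bool) : ℕ :=
  (Finset.univ.filter fun t => s t = false).card

/-- `G` has a positive cycle. -/
def HasPositiveCycle (G : SDigraph V) : Prop :=
  ∃ (m : ℕ) (v : Fin (m + 1) → V) (s : Fin (m + 1) → Bool),
    IsSignedCycleOn G m v s ∧ negCount s % 2 = 0

/-- `G` has a negative cycle. -/
def HasNegativeCycle (G : SDigraph V) : Prop :=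
  ∃ (m : ℕ) (v : Fin (m + 1) → V) (s : Fin (m + 1) → Bool),
    IsSignedCycleOn G m v s ∧ negCount s % 2 = 1

end SDigraph

/-- A finite dynamical system with components indexed by `V`: each `X i` is a
nonempty finite interval of integers and `f` maps `X = ∏ X i` into itself. -/
structure FDS (V : Type) where
  X : V → Finset ℤ
  nonempty : ∀ i, (X i).Nonempty
  interval : ∀ i, ∀ a ∈ X i, ∀ b ∈ X i, ∀ c : ℤ, a ≤ c → c ≤ b → c ∈ X i
  f : (V → ℤ) → V → ℤ
  maps : ∀ x, (∀ i, x i ∈ X i) → ∀ i, f x i ∈ X i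

namespace FDS

variable {V : Type}

/-- `x` is a state of the system, i.e. `x ∈ X`. -/
def mem (F : FDS V) (x : V → ℤ) : Prop := ∀ i, x i ∈ F.X i

/-- `G` is the interaction graph of `F`: there is a positive (negative) arc from
`j` to `i` iff increasing `x j` by one can strictly increase (decrease) `f _ i`. -/
def onGraph [DecidableEq V] (F : FDS V) (G : SDigraph V) : Prop :=
  (∀ j i, G.pos j i = true ↔ ∃ x, F.mem x ∧ x j + 1 ∈ F.X j ∧
      F.f x i < F.f (Function.update x j (x j + 1)) i) ∧
  (∀ j i, G.neg j i = true ↔ ∃ x, F.mem x ∧ x j + 1 ∈ F.X j ∧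
      F.f (Function.update x j (x j + 1)) i < F.f x i)

/-- `F` is degree-bounded with respect to `G`. -/
def degreeBounded [Fintype V] (F : FDS V) (G : SDigraph V) : Prop :=
  ∀ i, (G.outdeg i = 0 ∧ 0 < G.indeg i → (F.X i).card = 2) ∧
    (¬(G.outdeg i = 0 ∧ 0 < G.indeg i) → (F.X i).card ≤ G.outdeg i + 1)

/-- Fixed points of `F`. -/
def IsFixed (F : FDS V) (x : V → ℤ) : Prop := F.mem x ∧ F.f x = x

/-- `F` is nilpotent: some iterate is constant on `X`. -/
def Nilpotent (F : FDS V) : Prop :=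
  ∃ k : ℕ, 1 ≤ k ∧ ∃ c, ∀ x, F.mem x → F.f^[k] x = c

/-- `F` converges toward `H` in `k` steps:
`f^k(X) ⊆ h(Y) ⊆ Y ⊆ X` and `f = h` on `Y`. -/
def ConvergesToward (F H : FDS V) (k : ℕ) : Prop :=
  (∀ i, H.X i ⊆ F.X i) ∧
  (∀ x, F.mem x → ∃ y, H.mem y ∧ F.f^[k] x = H.f y) ∧
  (∀ x, H.mem x → F.f x = H.f x)

end FDS

/-! On a signed cycle every vertex has a single in-neighbour and out-degree one, so degree
boundedness makes every `X i` a two-element interval and `f_i` a non-constant, hence bijective,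
function of the in-neighbour's coordinate alone. Therefore `f` commutes with the negation
`x ↦ x̄` of all coordinates, which has no fixed point. If `f^k` were constant with value `c`,
then `c = f^k(x̄) = (f^k x)‾ = c̄`, which is absurd. -/

theorem Function.apply_eq_of_update_invariant {ι β γ : Type*} [Fintype ι] [DecidableEq ι]
    {S : ι → Set β} {g : (ι → β) → γ} {j : ι}
    (hg : ∀ x, (∀ i, x i ∈ S i) → ∀ a ≠ j, ∀ b ∈ S a, g (Function.update x a b) = g x)
    {x y : ι → β} (hx : ∀ i, x i ∈ S i) (hy : ∀ i, y i ∈ S i) (hxy : x j = y j) :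
    g x = g y := by
  suffices h : ∀ T : Finset ι, g (T.piecewise y x) = g x by
    simpa using (h Finset.univ).symm
  intro T
  induction T using Finset.induction_on with
  | empty => simp
  | insert a T _ ih =>
    have hmem : ∀ i, T.piecewise y x i ∈ S i := fun i => by
      by_cases hi : i ∈ T <;> simp [hi, hx i, hy i]
    rw [Finset.piecewise_insert, ← ih]
    by_cases haj : a = j
    · subst haj
      congr 1
      refine Function.update_eq_self_iff.mpr ?_
      by_cases ha : a ∈ T <;> simp [ha, hxy]
    · exact hg _ hmem a haj (y a) (hy a)

theorem Set.MapsTo.not_forall_iterate_eq_of_commute {α : Type*} {s : Set α} {f σ : α → α}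
    (hf : Set.MapsTo f s s) (hσ : Set.MapsTo σ s s) (hcomm : ∀ x ∈ s, f (σ x) = σ (f x))
    (hσfix : ∀ x ∈ s, σ x ≠ x) (hs : s.Nonempty) (k : ℕ) (c : α) :
    ¬ ∀ x ∈ s, f^[k] x = c := by
  intro hk
  have hcomm_iter : ∀ m, ∀ x ∈ s, f^[m] (σ x) = σ (f^[m] x) := by
    intro m
    induction m with
    | zero => simp
    | succ m ih =>
      intro x hx
      rw [Function.iterate_succ_apply, Function.iterate_succ_apply, hcomm x hx, ih _ (hf hx)]
  obtain ⟨x, hx⟩ := hs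
  refine hσfix _ ((hf.iterate k) hx) ?_
  rw [← hcomm_iter k x hx, hk x hx, hk _ (hσ hx)]

theorem Finset.eq_pair_min'_of_card_eq_two {s : Finset ℤ}
    (hs : ∀ a ∈ s, ∀ b ∈ s, ∀ c : ℤ, a ≤ c → c ≤ b → c ∈ s) (hne : s.Nonempty)
    (h2 : s.card = 2) : s = {s.min' hne, s.min' hne + 1} := by
  set m := s.min' hne
  obtain ⟨b, hb, hbm⟩ := s.exists_mem_ne (by omega) m
  have hmb : m < b := lt_of_le_of_ne (s.min'_le b hb) (Ne.symm hbm)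
  have hsub : {m, m + 1} ⊆ s := by
    intro c hc
    rcases Finset.mem_insert.mp hc with rfl | hc
    · exact s.min'_mem hne
    · rw [Finset.mem_singleton.mp hc]
      exact hs m (s.min'_mem hne) b hb _ (by omega) (by omega)
  exact (Finset.eq_of_subset_of_card_le hsub (by simp [h2])).symm

namespace SDigraph

variable {V : Type} [Fintype V] {G : SDigraph V}

theorem outdeg_eq_underOutdeg (hpar : ∀ a b : V, ¬(G.pos a b = true ∧ G.neg a b = true))
    (i : V) : G.outdeg i = G.underOutdeg i := by
  rw [outdeg, underOutdeg, ← Finset.card_union_of_disjoint, ← Finset.filter_or]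
  · congr!
  · exact Finset.disjoint_filter.mpr fun j _ hp hn => hpar i j ⟨hp, hn⟩

theorem exists_arc_iff_of_underIndeg_eq_one {i : V} (h : G.underIndeg i = 1) :
    ∃ j, ∀ a, G.arc a i ↔ a = j := by
  obtain ⟨j, hj⟩ := Finset.card_eq_one.mp h
  exact ⟨j, fun a => by simpa using Finset.ext_iff.mp hj a⟩

end SDigraph

namespace FDS

variable {V : Type} {F : FDS V}

theorem mem_update [DecidableEq V] {x : V → ℤ} (hx : F.mem x) {a : V} {b : ℤ}
    (hb : b ∈ F.X a) : F.mem (Function.update x a b) := by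
  intro i
  by_cases h : i = a
  · subst h
    simpa using hb
  · simpa [h] using hx i

noncomputable def lo (F : FDS V) (i : V) : ℤ := (F.X i).min' (F.nonempty i)

theorem X_eq_pair {i : V} (h : (F.X i).card = 2) : F.X i = {F.lo i, F.lo i + 1} :=
  Finset.eq_pair_min'_of_card_eq_two (F.interval i) (F.nonempty i) h

theorem eq_lo_or_eq_lo_add_one {i : V} (h : (F.X i).card = 2) {a : ℤ} (ha : a ∈ F.X i) :
    a = F.lo i ∨ a = F.lo i + 1 := by
  simpa [X_eq_pair h] using ha

/-- When every `X i` has two elements, this is the Boolean negation of all coordinates. -/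
noncomputable def flip (F : FDS V) (x : V → ℤ) : V → ℤ := fun i => 2 * F.lo i + 1 - x i

theorem flip_apply_ne (x : V → ℤ) (i : V) : F.flip x i ≠ x i := by
  simp only [flip]
  omega

theorem mem_flip (hX : ∀ i, (F.X i).card = 2) {x : V → ℤ} (hx : F.mem x) :
    F.mem (F.flip x) := by
  intro i
  rw [X_eq_pair (hX i)]
  rcases eq_lo_or_eq_lo_add_one (hX i) (hx i) with h | h <;>
    simp only [flip, h, Finset.mem_insert, Finset.mem_singleton] <;> omega

variable [DecidableEq V] {G : SDigraph V}

theorem apply_update_succ_of_not_arc (hG : F.onGraph G) {a i : V} (h : ¬ G.arc a i)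
    {x : V → ℤ} (hx : F.mem x) (ha : x a + 1 ∈ F.X a) :
    F.f (Function.update x a (x a + 1)) i = F.f x i := by
  have hp : ¬ G.pos a i = true := fun hp => h (Or.inl hp)
  have hn : ¬ G.neg a i = true := fun hn => h (Or.inr hn)
  rw [hG.1] at hp
  rw [hG.2] at hn
  push Not at hp hn
  exact le_antisymm (hp x hx ha) (hn x hx ha)

theorem exists_apply_update_succ_ne_of_arc (hG : F.onGraph G) {j i : V} (h : G.arc j i) :
    ∃ x, F.mem x ∧ x j + 1 ∈ F.X j ∧ F.f (Function.update x j (x j + 1)) i ≠ F.f x i := by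
  rcases h with hp | hn
  · obtain ⟨x, hx, hj, hlt⟩ := (hG.1 j i).mp hp
    exact ⟨x, hx, hj, hlt.ne'⟩
  · obtain ⟨x, hx, hj, hlt⟩ := (hG.2 j i).mp hn
    exact ⟨x, hx, hj, hlt.ne⟩

theorem one_lt_card_of_arc (hG : F.onGraph G) {j i : V} (h : G.arc j i) :
    1 < (F.X i).card := by
  obtain ⟨x, hx, hj, hne⟩ := exists_apply_update_succ_ne_of_arc hG h
  exact Finset.one_lt_card.mpr
    ⟨_, F.maps _ (mem_update hx hj) i, _, F.maps x hx i, hne⟩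

theorem apply_update_of_not_arc (hG : F.onGraph G) {a i : V} (hXa : (F.X a).card = 2)
    (h : ¬ G.arc a i) {x : V → ℤ} (hx : F.mem x) {b : ℤ} (hb : b ∈ F.X a) :
    F.f (Function.update x a b) i = F.f x i := by
  rcases eq_lo_or_eq_lo_add_one hXa (hx a) with hxa | hxa <;>
    rcases eq_lo_or_eq_lo_add_one hXa hb with rfl | rfl
  · rw [← hxa, Function.update_eq_self]
  · rw [← hxa]
    exact apply_update_succ_of_not_arc hG h hx (by rwa [hxa])
  · have hy := mem_update hx hb
    have hback := apply_update_succ_of_not_arc hG h hy (by simpa [hxa] using hx a)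
    rwa [Function.update_self, Function.update_idem, ← hxa, Function.update_eq_self,
      eq_comm] at hback
  · rw [← hxa, Function.update_eq_self]

variable [Fintype V] {i j : V}

theorem apply_eq_of_eq_in_neighbor (hG : F.onGraph G) (hX : ∀ i, (F.X i).card = 2)
    (hj : ∀ a, G.arc a i ↔ a = j) {x y : V → ℤ} (hx : F.mem x) (hy : F.mem y)
    (hxy : x j = y j) : F.f x i = F.f y i :=
  Function.apply_eq_of_update_invariant (S := fun i => (F.X i : Set ℤ)) (g := fun z => F.f z i)
    (fun _ hz a ha _ hb => apply_update_of_not_arc hG (hX a) (fun h => ha ((hj a).mp h)) hz hb)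
    hx hy hxy

theorem apply_flip (hG : F.onGraph G) (hX : ∀ i, (F.X i).card = 2)
    (hj : ∀ a, G.arc a i ↔ a = j) {x : V → ℤ} (hx : F.mem x) :
    F.f (F.flip x) i = F.flip (F.f x) i := by
  obtain ⟨x₀, hx₀, hj₀, hne⟩ := exists_apply_update_succ_ne_of_arc hG ((hj j).mpr rfl)
  set x₁ := Function.update x₀ j (x₀ j + 1)
  have hx₁ : F.mem x₁ := mem_update hx₀ hj₀
  -- `f_i` takes both values of `X i`: at `x₀`, where `x_j` is low, and at `x₁`, where it is high.
  have hsum : F.f x₁ i + F.f x₀ i = 2 * F.lo i + 1 := by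
    rcases eq_lo_or_eq_lo_add_one (hX i) (F.maps _ hx₁ i) with h | h <;>
      rcases eq_lo_or_eq_lo_add_one (hX i) (F.maps _ hx₀ i) with h' | h' <;> omega
  have hlow : x₀ j = F.lo j := by
    rcases eq_lo_or_eq_lo_add_one (hX j) (hx₀ j) with h | h
    · exact h
    · rcases eq_lo_or_eq_lo_add_one (hX j) hj₀ with h' | h' <;> omega
  have hx₁j : x₁ j = F.lo j + 1 := by simp [x₁, hlow]
  have hfactor : ∀ {y z}, F.mem y → F.mem z → y j = z j → F.f y i = F.f z i :=
    apply_eq_of_eq_in_neighbor hG hX hj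
  simp only [flip]
  rcases eq_lo_or_eq_lo_add_one (hX j) (hx j) with h | h
  · rw [hfactor (mem_flip hX hx) hx₁ (by simp only [flip, h, hx₁j]; omega),
      hfactor hx hx₀ (by rw [h, hlow])]
    omega
  · rw [hfactor (mem_flip hX hx) hx₀ (by simp only [flip, h, hlow]; omega),
      hfactor hx hx₁ (by rw [h, hx₁j])]
    omega

end FDS

/-- No degree-bounded FDS on a signed cycle is nilpotent. -/
theorem stmt9 (n : ℕ) (G : SDigraph (Fin n)) (hc : SDigraph.IsSignedCycleGraph G)
    (F : FDS (Fin n)) (hG : F.onGraph G) (hdb : F.degreeBounded G) :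
    ¬ F.Nilpotent := by
  obtain ⟨hn, -, hpar, hout, hin⟩ := hc
  choose pred hpred using fun i => SDigraph.exists_arc_iff_of_underIndeg_eq_one (hin i)
  have houtdeg (i : Fin n) : G.outdeg i = 1 := (G.outdeg_eq_underOutdeg hpar i).trans (hout i)
  have hX (i : Fin n) : (F.X i).card = 2 := by
    have hle := (hdb i).2 (by simp [houtdeg i])
    rw [houtdeg i] at hle
    have hgt := FDS.one_lt_card_of_arc hG ((hpred i (pred i)).mpr rfl)
    omega
  rintro ⟨k, -, c, hk⟩
  exact Set.MapsTo.not_forall_iterate_eq_of_commute (s := {x | F.mem x}) (σ := F.flip)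
    (fun x hx => F.maps x hx) (fun x hx => FDS.mem_flip hX hx)
    (fun x hx => funext fun i => FDS.apply_flip hG hX (hpred i) hx)
    (fun x _ h => FDS.flip_apply_ne x ⟨0, by simpa using hn⟩ (congrFun h _))
    ⟨_, fun i => (F.X i).min'_mem (F.nonempty i)⟩ k c hk
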